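/- Let an almost paracontact metric Walker structure on ℝ³ be η-Einstein, i.e. there exist smooth nowhere-vanishing functions a, b : ℝ³ → ℝ with ρ(∂i,∂j) = a·g(∂i,∂j) + b·η(∂i)η(∂j) for all coordinate fields at every point. Then: (a) R(∂i,∂j)ξ = 0 everywhere for all i,j, so every ξ-sectional curvature vanishes: g(R(X,ξ)ξ, X) = 0 for every vector field X; (b) ξ₃ ≡ 0, f_xx vanishes nowhere, and for the vector fields V₁ = ∂x and V₂ = (f_xy/f_xx)∂y + ∂z one has η(V₁) = η(V₂) = 0, g(V₁,V₁) = 0, g(V₁,V₂) = 1, g(R(V₁,V₂)V₂, V₁) = (1/2)f_xx, so that the φ-sectional curvature K(V₁,V₂) = g(R(V₁,V₂)V₂,V₁)/(g(V₁,V₁)g(V₂,V₂) − g(V₁,V₂)²) equals −(1/2)f_xx, which is nowhere zero. (Theorem 5.3(iii),(iv): an η-Einstein almost paracontact metric 3-dimensional Walker manifold has zero ξ-sectional curvature and nonzero φ-sectional curvature −(1/2)f_xx.) -/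

import Mathlib

open Real

/-- Points of the Walker manifold `M = ℝ³` with coordinates `(x,y,z)`. -/
abbrev Pt : Type := ℝ × ℝ × ℝ

/-- Vector fields on `ℝ³`, given by their components in the frame `∂x, ∂y, ∂z`. -/
abbrev VF : Type := Pt → Pt

/-- Partial derivative ∂/∂x. -/
noncomputable def pdx (F : Pt → ℝ) (p : Pt) : ℝ := fderiv ℝ F p ((1:ℝ), (0:ℝ), (0:ℝ))

/-- Partial derivative ∂/∂y. -/
noncomputable def pdy (F : Pt → ℝ) (p : Pt) : ℝ := fderiv ℝ F p ((0:ℝ), (1:ℝ), (0:ℝ))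

/-- Partial derivative ∂/∂z. -/
noncomputable def pdz (F : Pt → ℝ) (p : Pt) : ℝ := fderiv ℝ F p ((0:ℝ), (0:ℝ), (1:ℝ))

/-- Directional derivative of a scalar function along a vector field. -/
noncomputable def dd (X : VF) (F : Pt → ℝ) (p : Pt) : ℝ := fderiv ℝ F p (X p)

/-- Components of a tangent vector. -/
def c1 (v : Pt) : ℝ := v.1
def c2 (v : Pt) : ℝ := v.2.1
def c3 (v : Pt) : ℝ := v.2.2

/-- The coordinate vector fields `∂x, ∂y, ∂z`. -/
noncomputable def E : Fin 3 → VF :=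
  ![fun _ => ((1:ℝ), (0:ℝ), (0:ℝ)), fun _ => ((0:ℝ), (1:ℝ), (0:ℝ)),
    fun _ => ((0:ℝ), (0:ℝ), (1:ℝ))]

/-- The Walker metric with `ε = 1`: `g(∂x,∂z) = g(∂z,∂x) = 1`, `g(∂y,∂y) = 1`,
`g(∂z,∂z) = f`, all other components zero. -/
noncomputable def gm (f : Pt → ℝ) (X Y : VF) (p : Pt) : ℝ :=
  c1 (X p) * c3 (Y p) + c3 (X p) * c1 (Y p) + c2 (X p) * c2 (Y p)
    + f p * c3 (X p) * c3 (Y p)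

/-- The Levi-Civita connection of the Walker metric:
`∇_{∂x}∂z = ∇_{∂z}∂x = (1/2) f_x ∂x`, `∇_{∂y}∂z = ∇_{∂z}∂y = (1/2) f_y ∂x`,
`∇_{∂z}∂z = (1/2)(f f_x + f_z) ∂x - (1/2) f_y ∂y - (1/2) f_x ∂z`, all other covariant
derivatives of coordinate fields zero, extended by `C^∞`-linearity below and the
Leibniz rule above. -/
noncomputable def cov (f : Pt → ℝ) (X Y : VF) : VF := fun p =>
  ( dd X (fun q => c1 (Y q)) p
      + (1/2) * pdx f p * (c1 (X p) * c3 (Y p) + c3 (X p) * c1 (Y p))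
      + (1/2) * pdy f p * (c2 (X p) * c3 (Y p) + c3 (X p) * c2 (Y p))
      + (1/2) * (f p * pdx f p + pdz f p) * (c3 (X p) * c3 (Y p)),
    dd X (fun q => c2 (Y q)) p - (1/2) * pdy f p * (c3 (X p) * c3 (Y p)),
    dd X (fun q => c3 (Y q)) p - (1/2) * pdx f p * (c3 (X p) * c3 (Y p)) )

/-- Lie bracket of vector fields on `ℝ³`. -/
noncomputable def brk (X Y : VF) : VF := fun p =>
  ( dd X (fun q => c1 (Y q)) p - dd Y (fun q => c1 (X q)) p,
    dd X (fun q => c2 (Y q)) p - dd Y (fun q => c2 (X q)) p,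
    dd X (fun q => c3 (Y q)) p - dd Y (fun q => c3 (X q)) p )

/-- The `(1,1)`-tensor `φ` of the almost paracontact metric Walker structure:
`φ∂x = -ξ₂∂x + ξ₃∂y`, `φ∂y = (ξ₁ + fξ₃)∂x - ξ₃∂z`, `φ∂z = -fξ₂∂x - ξ₁∂y + ξ₂∂z`. -/
noncomputable def phiV (f ξ₁ ξ₂ ξ₃ : Pt → ℝ) (X : VF) : VF := fun p =>
  ( -ξ₂ p * c1 (X p) + (ξ₁ p + f p * ξ₃ p) * c2 (X p) - f p * ξ₂ p * c3 (X p),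
    ξ₃ p * c1 (X p) - ξ₁ p * c3 (X p),
    -ξ₃ p * c2 (X p) + ξ₂ p * c3 (X p) )

/-- The 1-form `η = ξ₃ dx + ξ₂ dy + (ξ₁ + fξ₃) dz`. -/
noncomputable def etaV (f ξ₁ ξ₂ ξ₃ : Pt → ℝ) (X : VF) (p : Pt) : ℝ :=
  ξ₃ p * c1 (X p) + ξ₂ p * c2 (X p) + (ξ₁ p + f p * ξ₃ p) * c3 (X p)

/-- The structure tensor `F(X,Y,Z) = g((∇_X φ)Y, Z)`, `(∇_X φ)Y = ∇_X(φY) - φ(∇_X Y)`. -/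
noncomputable def Ften (f ξ₁ ξ₂ ξ₃ : Pt → ℝ) (X Y Z : VF) (p : Pt) : ℝ :=
  gm f (fun q => cov f X (phiV f ξ₁ ξ₂ ξ₃ Y) q - phiV f ξ₁ ξ₂ ξ₃ (cov f X Y) q) Z p

/-- The fundamental 2-form `Φ(X,Y) = g(φX, Y)`. -/
noncomputable def Phi2 (f ξ₁ ξ₂ ξ₃ : Pt → ℝ) (X Y : VF) : Pt → ℝ :=
  gm f (phiV f ξ₁ ξ₂ ξ₃ X) Y

/-- `dη(∂i,∂j) = (1/2)(∂i(η(∂j)) - ∂j(η(∂i)))` on coordinate fields. -/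
noncomputable def deta (f ξ₁ ξ₂ ξ₃ : Pt → ℝ) (i j : Fin 3) (p : Pt) : ℝ :=
  (1/2) * (dd (E i) (etaV f ξ₁ ξ₂ ξ₃ (E j)) p - dd (E j) (etaV f ξ₁ ξ₂ ξ₃ (E i)) p)

/-- `dη(X,Y) = (1/2)(X(η(Y)) - Y(η(X)) - η([X,Y]))` on general vector fields. -/
noncomputable def detaB (f ξ₁ ξ₂ ξ₃ : Pt → ℝ) (X Y : VF) (p : Pt) : ℝ :=
  (1/2) * (dd X (etaV f ξ₁ ξ₂ ξ₃ Y) p - dd Y (etaV f ξ₁ ξ₂ ξ₃ X) p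
    - etaV f ξ₁ ξ₂ ξ₃ (brk X Y) p)

/-- The Nijenhuis tensor `N(X,Y) = φ²[X,Y] + [φX,φY] - φ[φX,Y] - φ[X,φY]`. -/
noncomputable def nij (f ξ₁ ξ₂ ξ₃ : Pt → ℝ) (X Y : VF) : VF := fun p =>
  phiV f ξ₁ ξ₂ ξ₃ (phiV f ξ₁ ξ₂ ξ₃ (brk X Y)) p
    + brk (phiV f ξ₁ ξ₂ ξ₃ X) (phiV f ξ₁ ξ₂ ξ₃ Y) p
    - phiV f ξ₁ ξ₂ ξ₃ (brk (phiV f ξ₁ ξ₂ ξ₃ X) Y) p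
    - phiV f ξ₁ ξ₂ ξ₃ (brk X (phiV f ξ₁ ξ₂ ξ₃ Y)) p

/-- The curvature tensor, with the paper's sign convention
`R(X,Y)Z = ∇_{[X,Y]}Z - ∇_X∇_Y Z + ∇_Y∇_X Z`. -/
noncomputable def Rop (f : Pt → ℝ) (X Y Z : VF) : VF := fun p =>
  cov f (brk X Y) Z p - cov f X (cov f Y Z) p + cov f Y (cov f X Z) p

/-- Second partial derivatives of `f`. -/
noncomputable def fxx (f : Pt → ℝ) : Pt → ℝ := pdx (pdx f)
noncomputable def fxy (f : Pt → ℝ) : Pt → ℝ := pdy (pdx f)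
noncomputable def fyy (f : Pt → ℝ) : Pt → ℝ := pdy (pdy f)

/-- The Ricci tensor of the Walker metric: `ρ(∂x,∂z) = ρ(∂z,∂x) = (1/2) f_xx`,
`ρ(∂y,∂z) = ρ(∂z,∂y) = (1/2) f_xy`, `ρ(∂z,∂z) = (1/2)(f f_xx - f_yy)`, all other
components zero, extended tensorially. -/
noncomputable def rhoT (f : Pt → ℝ) (X Y : VF) (p : Pt) : ℝ :=
  (1/2) * fxx f p * (c1 (X p) * c3 (Y p) + c3 (X p) * c1 (Y p))
    + (1/2) * fxy f p * (c2 (X p) * c3 (Y p) + c3 (X p) * c2 (Y p))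
    + (1/2) * (f p * fxx f p - fyy f p) * (c3 (X p) * c3 (Y p))

/-- The Ricci operator: `Q∂x = (1/2)f_xx ∂x`, `Q∂y = (1/2)f_xy ∂x`,
`Q∂z = -(1/2)f_yy ∂x + (1/2)f_xy ∂y + (1/2)f_xx ∂z`. -/
noncomputable def Qop (f : Pt → ℝ) (X : VF) : VF := fun p =>
  ( (1/2) * fxx f p * c1 (X p) + (1/2) * fxy f p * c2 (X p) - (1/2) * fyy f p * c3 (X p),
    (1/2) * fxy f p * c3 (X p),
    (1/2) * fxx f p * c3 (X p) )

/-- `dΦ(∂x,∂y,∂z) = ∂x(Φ(∂y,∂z)) - ∂y(Φ(∂x,∂z)) + ∂z(Φ(∂x,∂y))`. -/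
noncomputable def dPhi (f ξ₁ ξ₂ ξ₃ : Pt → ℝ) (p : Pt) : ℝ :=
  pdx (Phi2 f ξ₁ ξ₂ ξ₃ (E 1) (E 2)) p - pdy (Phi2 f ξ₁ ξ₂ ξ₃ (E 0) (E 2)) p
    + pdz (Phi2 f ξ₁ ξ₂ ξ₃ (E 0) (E 1)) p

/-- `(η∧Φ)(∂x,∂y,∂z) = η(∂x)Φ(∂y,∂z) - η(∂y)Φ(∂x,∂z) + η(∂z)Φ(∂x,∂y)`. -/
noncomputable def etaWedgePhi (f ξ₁ ξ₂ ξ₃ : Pt → ℝ) (p : Pt) : ℝ :=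
  etaV f ξ₁ ξ₂ ξ₃ (E 0) p * Phi2 f ξ₁ ξ₂ ξ₃ (E 1) (E 2) p
    - etaV f ξ₁ ξ₂ ξ₃ (E 1) p * Phi2 f ξ₁ ξ₂ ξ₃ (E 0) (E 2) p
    + etaV f ξ₁ ξ₂ ξ₃ (E 2) p * Phi2 f ξ₁ ξ₂ ξ₃ (E 0) (E 1) p

/-- The constant function `0`. -/
noncomputable def zeroF : Pt → ℝ := fun _ => 0
/-- The constant function `1`. -/
noncomputable def oneF : Pt → ℝ := fun _ => 1
/-- The constant function `-1`. -/
noncomputable def negOneF : Pt → ℝ := fun _ => -1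

/-- The vector field `V₂ = (f_xy/f_xx)∂y + ∂z`. -/
noncomputable def V2 (f : Pt → ℝ) : VF := fun p => ((0:ℝ), fxy f p / fxx f p, (1:ℝ))

/-!
The `(∂x,∂x)` component of the η-Einstein condition forces `ξ₃ = 0`; the constraint then gives
`ξ₂² = 1`, so `ξ₂` is locally constant, and the other components express `f_xx, f_xy, f_yy`
through `a, b, ξ₁, ξ₂` in such a way that `(ξ₁, ξ₂)` lies in the kernel of the `(x,y)`-Hessian
of `f`.

For such `ξ`, `∇_X ξ` is a multiple of `∂x`, and a direct computation gives
`R(X,Y)ξ = ½ (X_z γ(Y) - Y_z γ(X)) ∂x` with `γ(v) = ξ₁ ∂_v f_x + ξ₂ ∂_v f_y`: the second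
derivatives of `ξ₁` cancel by symmetry of its Hessian. The kernel condition makes
`γ(v) = v_z γ(∂z)`, hence `R(X,Y)ξ = 0` for all `X, Y`. On the other side, for any field `V`
with `z`-component `1`, `g(R(∂x,V)V, ∂x)` is the `z`-component of `R(∂x,V)V`, which is `½ f_xx`.
-/

section Calculus

variable {V : Type*} [NormedAddCommGroup V] [NormedSpace ℝ V]

lemma differentiable_fderiv_apply {F : V → ℝ} (hF : ContDiff ℝ 2 F) (v : V) :
    Differentiable ℝ (fun q => fderiv ℝ F q v) :=
  ((hF.fderiv_right (m := 1) (by norm_num)).clm_apply contDiff_const).differentiable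
    (by norm_num)

lemma fderiv_fderiv_apply {F : V → ℝ} (hF : ContDiff ℝ 2 F) (p v w : V) :
    fderiv ℝ (fun q => fderiv ℝ F q v) p w = fderiv ℝ (fderiv ℝ F) p w v := by
  have hd : DifferentiableAt ℝ (fderiv ℝ F) p :=
    ((hF.fderiv_right (m := 1) (by norm_num)).differentiable (by norm_num)).differentiableAt
  rw [fderiv_clm_apply hd (differentiableAt_const v)]
  simp

lemma fderiv_fderiv_apply_comm {F : V → ℝ} (hF : ContDiff ℝ 2 F) (p v w : V) :
    fderiv ℝ (fun q => fderiv ℝ F q v) p w = fderiv ℝ (fun q => fderiv ℝ F q w) p v := by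
  rw [fderiv_fderiv_apply hF, fderiv_fderiv_apply hF]
  exact hF.contDiffAt.isSymmSndFDerivAt (by simp) w v

lemma hasFDerivAt_zero_of_sq_eq_one {u : V → ℝ} (hu : Differentiable ℝ u)
    (h : ∀ q, u q ^ 2 = 1) (p : V) : HasFDerivAt u (0 : V →L[ℝ] ℝ) p := by
  have hsq : HasFDerivAt (fun q => u q ^ 2) (0 : V →L[ℝ] ℝ) p := by
    simpa only [h] using hasFDerivAt_const (1 : ℝ) p
  have hzero : (2 * u p) • fderiv ℝ u p = 0 := by
    simpa using ((hu p).hasFDerivAt.pow 2).unique hsq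
  have hu0 : 2 * u p ≠ 0 := by
    intro h0
    nlinarith [h p]
  rw [← (smul_eq_zero_iff_right hu0).mp hzero]
  exact (hu p).hasFDerivAt

end Calculus

lemma fderiv_apply_eq_pd (F : Pt → ℝ) (p v : Pt) :
    fderiv ℝ F p v = v.1 * pdx F p + v.2.1 * pdy F p + v.2.2 * pdz F p := by
  have hv : v = v.1 • ((1:ℝ), (0:ℝ), (0:ℝ)) + v.2.1 • ((0:ℝ), (1:ℝ), (0:ℝ))
      + v.2.2 • ((0:ℝ), (0:ℝ), (1:ℝ)) := by simp
  rw [hv, map_add, map_add, map_smul, map_smul, map_smul]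
  simp [pdx, pdy, pdz]

lemma mul_fderiv_pdx_add_mul_fderiv_pdy {f : Pt → ℝ} (hf : ContDiff ℝ 2 f) {s t : ℝ} {p : Pt}
    (h₁ : s * fxx f p + t * fxy f p = 0) (h₂ : s * fxy f p + t * fyy f p = 0) (v : Pt) :
    s * fderiv ℝ (pdx f) p v + t * fderiv ℝ (pdy f) p v
      = v.2.2 * (s * pdz (pdx f) p + t * pdz (pdy f) p) := by
  have hcomm : pdx (pdy f) p = pdy (pdx f) p := fderiv_fderiv_apply_comm hf p _ _
  rw [fderiv_apply_eq_pd (pdx f), fderiv_apply_eq_pd (pdy f), hcomm]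
  simp only [fxx, fxy, fyy] at h₁ h₂
  linear_combination v.1 * h₁ + v.2.1 * h₂

lemma differentiable_E (i : Fin 3) : Differentiable ℝ (E i) := by
  fin_cases i <;> exact differentiable_const _

lemma brk_apply {X Y : VF} {p : Pt} (hX : DifferentiableAt ℝ X p)
    (hY : DifferentiableAt ℝ Y p) :
    brk X Y p = fderiv ℝ Y p (X p) - fderiv ℝ X p (Y p) := by
  simp [brk, dd, c1, c2, c3, fderiv.fst hX, fderiv.fst hY, fderiv.snd hX, fderiv.snd hY,
    fderiv.fst hX.snd, fderiv.fst hY.snd, fderiv.snd hX.snd, fderiv.snd hY.snd]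
  rfl

def IsEtaEinstein (f ξ₁ ξ₂ ξ₃ a b : Pt → ℝ) : Prop :=
  ∀ (i j : Fin 3) (p : Pt), rhoT f (E i) (E j) p = a p * gm f (E i) (E j) p
    + b p * etaV f ξ₁ ξ₂ ξ₃ (E i) p * etaV f ξ₁ ξ₂ ξ₃ (E j) p

namespace IsEtaEinstein

variable {f ξ₁ ξ₂ ξ₃ a b : Pt → ℝ} (h : IsEtaEinstein f ξ₁ ξ₂ ξ₃ a b) {p : Pt}
include h

lemma xi₃_eq_zero (hb : b p ≠ 0) : ξ₃ p = 0 := by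
  have e := h 0 0 p
  simp [rhoT, gm, etaV, E, c1, c2, c3] at e
  exact e.resolve_left hb

lemma add_mul_xi₂_sq_eq_zero : a p + b p * ξ₂ p ^ 2 = 0 := by
  have e := h 1 1 p
  simp [rhoT, gm, etaV, E, c1, c2, c3] at e
  linear_combination -e

lemma fxx_eq (h₃ : ξ₃ p = 0) : fxx f p = 2 * a p := by
  have e := h 0 2 p
  simp [rhoT, gm, etaV, E, c1, c2, c3, h₃] at e
  linear_combination 2 * e

lemma fxy_eq (h₃ : ξ₃ p = 0) : fxy f p = 2 * b p * ξ₁ p * ξ₂ p := by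
  have e := h 1 2 p
  simp [rhoT, gm, etaV, E, c1, c2, c3, h₃] at e
  linear_combination 2 * e

lemma fyy_eq (h₃ : ξ₃ p = 0) : fyy f p = -2 * b p * ξ₁ p ^ 2 := by
  have e := h 2 2 p
  simp [rhoT, gm, etaV, E, c1, c2, c3, h₃] at e
  linear_combination -2 * e + f p * h.fxx_eq h₃

lemma mul_fxx_add_mul_fxy_eq_zero (h₃ : ξ₃ p = 0) : ξ₁ p * fxx f p + ξ₂ p * fxy f p = 0 := by
  linear_combination ξ₁ p * h.fxx_eq h₃ + ξ₂ p * h.fxy_eq h₃ + 2 * ξ₁ p * h.add_mul_xi₂_sq_eq_zero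

lemma mul_fxy_add_mul_fyy_eq_zero (h₃ : ξ₃ p = 0) : ξ₁ p * fxy f p + ξ₂ p * fyy f p = 0 := by
  linear_combination ξ₁ p * h.fxy_eq h₃ + ξ₂ p * h.fyy_eq h₃

lemma fxx_ne_zero (h₃ : ξ₃ p = 0) (ha : a p ≠ 0) : fxx f p ≠ 0 := by
  rw [h.fxx_eq h₃]
  exact mul_ne_zero two_ne_zero ha

lemma etaV_V2 (h₃ : ξ₃ p = 0) (ha : a p ≠ 0) : etaV f ξ₁ ξ₂ ξ₃ (V2 f) p = 0 := by
  simp only [etaV, V2, c1, c2, c3, h₃, h.fxy_eq h₃, h.fxx_eq h₃]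
  field_simp
  linear_combination ξ₁ p * h.add_mul_xi₂_sq_eq_zero

end IsEtaEinstein

section CovariantDerivativeOfXi

variable {f ξ₁ ξ₂ : Pt → ℝ}

noncomputable def xiCovCoeff (f ξ₁ ξ₂ : Pt → ℝ) (X : VF) (q : Pt) : ℝ :=
  dd X ξ₁ q + 1/2 * c3 (X q) * (pdx f q * ξ₁ q + pdy f q * ξ₂ q)

lemma cov_mul_dx (f u : Pt → ℝ) (X : VF) :
    cov f X (fun q => (u q, 0, 0))
      = fun q => (dd X u q + 1/2 * pdx f q * c3 (X q) * u q, 0, 0) := by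
  funext q
  simp [cov, dd, c1, c2, c3]
  ring

lemma cov_xi (hξ₂ : ∀ q, HasFDerivAt ξ₂ (0 : Pt →L[ℝ] ℝ) q) (X : VF) :
    cov f X (fun q => (ξ₁ q, ξ₂ q, 0)) = fun q => (xiCovCoeff f ξ₁ ξ₂ X q, 0, 0) := by
  funext q
  simp [cov, xiCovCoeff, dd, c1, c2, c3, (hξ₂ q).fderiv]
  ring

lemma dd_xiCovCoeff (hf : ContDiff ℝ 2 f) (hξ₁ : ContDiff ℝ 2 ξ₁)
    (hξ₂ : ∀ q, HasFDerivAt ξ₂ (0 : Pt →L[ℝ] ℝ) q) (X : VF) {Y : VF} {p : Pt}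
    (hY : DifferentiableAt ℝ Y p) :
    dd X (xiCovCoeff f ξ₁ ξ₂ Y) p = fderiv ℝ (fderiv ℝ ξ₁) p (X p) (Y p)
      + fderiv ℝ ξ₁ p (fderiv ℝ Y p (X p))
      + 1/2 * (fderiv ℝ Y p (X p)).2.2 * (pdx f p * ξ₁ p + pdy f p * ξ₂ p)
      + 1/2 * (Y p).2.2 * (fderiv ℝ (pdx f) p (X p) * ξ₁ p
        + pdx f p * fderiv ℝ ξ₁ p (X p) + fderiv ℝ (pdy f) p (X p) * ξ₂ p) := by
  have hdξ₁ : HasFDerivAt (fderiv ℝ ξ₁) (fderiv ℝ (fderiv ℝ ξ₁) p) p :=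
    ((hξ₁.fderiv_right (m := 1) (by norm_num)).differentiable (by norm_num)
      ).differentiableAt.hasFDerivAt
  have hfx : HasFDerivAt (pdx f) (fderiv ℝ (pdx f) p) p :=
    (differentiable_fderiv_apply hf _ p).hasFDerivAt
  have hfy : HasFDerivAt (pdy f) (fderiv ℝ (pdy f) p) p :=
    (differentiable_fderiv_apply hf _ p).hasFDerivAt
  have hξ₁' := ((hξ₁.differentiable (by norm_num)) p).hasFDerivAt
  have hY' := hY.hasFDerivAt
  have hderiv := (hdξ₁.clm_apply hY').fun_add ((hY'.snd.snd.const_mul (1/2 : ℝ)).fun_mul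
    ((hfx.fun_mul hξ₁').fun_add (hfy.fun_mul (hξ₂ p))))
  rw [dd, HasFDerivAt.fderiv (f := xiCovCoeff f ξ₁ ξ₂ Y) hderiv]
  simp
  ring

lemma Rop_xi (hf : ContDiff ℝ 2 f) (hξ₁ : ContDiff ℝ 2 ξ₁)
    (hξ₂ : ∀ q, HasFDerivAt ξ₂ (0 : Pt →L[ℝ] ℝ) q) {X Y : VF} {p : Pt}
    (hX : DifferentiableAt ℝ X p) (hY : DifferentiableAt ℝ Y p) :
    Rop f X Y (fun q => (ξ₁ q, ξ₂ q, 0)) p =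
      (1/2 * ((X p).2.2 * (ξ₁ p * fderiv ℝ (pdx f) p (Y p) + ξ₂ p * fderiv ℝ (pdy f) p (Y p))
        - (Y p).2.2 * (ξ₁ p * fderiv ℝ (pdx f) p (X p) + ξ₂ p * fderiv ℝ (pdy f) p (X p))),
        0, 0) := by
  have hsymm : fderiv ℝ (fderiv ℝ ξ₁) p (X p) (Y p) = fderiv ℝ (fderiv ℝ ξ₁) p (Y p) (X p) :=
    hξ₁.contDiffAt.isSymmSndFDerivAt (by simp) (X p) (Y p)
  simp only [Rop, cov_xi hξ₂, cov_mul_dx]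
  rw [dd_xiCovCoeff hf hξ₁ hξ₂ X hY, dd_xiCovCoeff hf hξ₁ hξ₂ Y hX]
  simp only [xiCovCoeff, dd, brk_apply hX hY, c3, map_sub, Prod.snd_sub]
  ext
  · simp only [Prod.fst_add, Prod.fst_sub]
    linear_combination -hsymm
  all_goals simp

lemma Rop_xi_eq_zero (hf : ContDiff ℝ 2 f) (hξ₁ : ContDiff ℝ 2 ξ₁)
    (hξ₂ : ∀ q, HasFDerivAt ξ₂ (0 : Pt →L[ℝ] ℝ) q) {X Y : VF} {p : Pt}
    (hX : DifferentiableAt ℝ X p) (hY : DifferentiableAt ℝ Y p)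
    (h₁ : ξ₁ p * fxx f p + ξ₂ p * fxy f p = 0) (h₂ : ξ₁ p * fxy f p + ξ₂ p * fyy f p = 0) :
    Rop f X Y (fun q => (ξ₁ q, ξ₂ q, 0)) p = 0 := by
  rw [Rop_xi hf hξ₁ hξ₂ hX hY, mul_fderiv_pdx_add_mul_fderiv_pdy hf h₁ h₂,
    mul_fderiv_pdx_add_mul_fderiv_pdy hf h₁ h₂]
  ext <;> simp
  ring

end CovariantDerivativeOfXi

lemma gm_Rop_dx_of_snd_snd_eq_one {f : Pt → ℝ} {p : Pt} (hf : DifferentiableAt ℝ (pdx f) p)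
    (V : VF) (hV : ∀ q, (V q).2.2 = 1) :
    gm f (Rop f (E 0) V V) (E 0) p = 1/2 * fxx f p := by
  have hV₃ : (fun q => c3 (V q)) = fun _ => 1 := funext hV
  have hcovVV : (fun q => c3 (cov f V V q)) = fun q => -(1/2 * pdx f q) := by
    funext q; simp [cov, dd, c3, hV]
  have hcovdxV : (fun q => c3 (cov f (E 0) V q)) = fun _ => 0 := by
    funext q; simp [cov, dd, c3, hV, E]
  have hgm : gm f (Rop f (E 0) V V) (E 0) p = c3 (Rop f (E 0) V V p) := by
    simp [gm, E, c1, c2, c3]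
  rw [hgm]
  change dd (brk (E 0) V) (fun q => c3 (V q)) p - _
    - (dd (E 0) (fun q => c3 (cov f V V q)) p - _)
    + (dd V (fun q => c3 (cov f (E 0) V q)) p - _) = _
  have hbrk₃ : c3 (brk (E 0) V p) = 0 := by simp [brk, dd, c3, hV, E]
  rw [hV₃, hcovVV, hcovdxV, congrFun hcovdxV p, hbrk₃]
  simp only [dd, fderiv_fun_neg, fderiv_const_mul hf]
  simp [E, fxx, pdx, c3]

theorem etaEinstein_sectional_curvatures_general (f ξ₁ ξ₂ ξ₃ : Pt → ℝ)
    (hf : ContDiff ℝ (⊤ : ℕ∞) f) (h1 : ContDiff ℝ (⊤ : ℕ∞) ξ₁)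
    (h2 : ContDiff ℝ (⊤ : ℕ∞) ξ₂)
    (hconstr : ∀ p : Pt, ξ₂ p ^ 2 + f p * ξ₃ p ^ 2 + 2 * ξ₁ p * ξ₃ p = 1)
    (a b : Pt → ℝ)
    (ha0 : ∀ p : Pt, a p ≠ 0) (hb0 : ∀ p : Pt, b p ≠ 0)
    (hEin : ∀ (i j : Fin 3) (p : Pt),
      rhoT f (E i) (E j) p = a p * gm f (E i) (E j) p
        + b p * etaV f ξ₁ ξ₂ ξ₃ (E i) p * etaV f ξ₁ ξ₂ ξ₃ (E j) p) :
    (∀ (i j : Fin 3) (p : Pt), Rop f (E i) (E j) (fun q => (ξ₁ q, ξ₂ q, ξ₃ q)) p = 0) ∧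
    (∀ X : VF, ContDiff ℝ (⊤ : ℕ∞) X → ∀ p : Pt,
      gm f (Rop f X (fun q => (ξ₁ q, ξ₂ q, ξ₃ q)) (fun q => (ξ₁ q, ξ₂ q, ξ₃ q))) X p = 0) ∧
    (∀ p : Pt, ξ₃ p = 0) ∧ (∀ p : Pt, fxx f p ≠ 0) ∧
    (∀ p : Pt, etaV f ξ₁ ξ₂ ξ₃ (E 0) p = 0) ∧
    (∀ p : Pt, etaV f ξ₁ ξ₂ ξ₃ (V2 f) p = 0) ∧
    (∀ p : Pt, gm f (E 0) (E 0) p = 0) ∧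
    (∀ p : Pt, gm f (E 0) (V2 f) p = 1) ∧
    (∀ p : Pt, gm f (Rop f (E 0) (V2 f) (V2 f)) (E 0) p = (1/2) * fxx f p) ∧
    (∀ p : Pt, gm f (Rop f (E 0) (V2 f) (V2 f)) (E 0) p /
        (gm f (E 0) (E 0) p * gm f (V2 f) (V2 f) p - gm f (E 0) (V2 f) p ^ 2) =
      -((1/2) * fxx f p)) ∧
    (∀ p : Pt, -((1/2) * fxx f p) ≠ 0) := by
  have hη : IsEtaEinstein f ξ₁ ξ₂ ξ₃ a b := hEin
  have hf₂ : ContDiff ℝ 2 f := hf.of_le (WithTop.coe_le_coe.mpr le_top)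
  have hξ₁ : ContDiff ℝ 2 ξ₁ := h1.of_le (WithTop.coe_le_coe.mpr le_top)
  have hξ₃ : ∀ p, ξ₃ p = 0 := fun p => hη.xi₃_eq_zero (hb0 p)
  have hfxx : ∀ p, fxx f p ≠ 0 := fun p => hη.fxx_ne_zero (hξ₃ p) (ha0 p)
  have hK : ∀ p, gm f (Rop f (E 0) (V2 f) (V2 f)) (E 0) p = 1/2 * fxx f p := fun p =>
    gm_Rop_dx_of_snd_snd_eq_one (differentiable_fderiv_apply hf₂ _ p) (V2 f) fun _ => rfl
  have hξ₂ : ∀ q, HasFDerivAt ξ₂ (0 : Pt →L[ℝ] ℝ) q :=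
    hasFDerivAt_zero_of_sq_eq_one (h2.differentiable (by simp)) fun q => by
      simpa [hξ₃ q] using hconstr q
  have hR : ∀ {X Y : VF} {p : Pt}, DifferentiableAt ℝ X p → DifferentiableAt ℝ Y p →
      Rop f X Y (fun q => (ξ₁ q, ξ₂ q, ξ₃ q)) p = 0 := fun hX hY => by
    simpa only [hξ₃] using Rop_xi_eq_zero hf₂ hξ₁ hξ₂ hX hY
      (hη.mul_fxx_add_mul_fxy_eq_zero (hξ₃ _)) (hη.mul_fxy_add_mul_fyy_eq_zero (hξ₃ _))
  have hξ : Differentiable ℝ (fun q => (ξ₁ q, ξ₂ q, ξ₃ q)) := by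
    simp only [hξ₃]
    exact (h1.differentiable (by simp)).prodMk ((h2.differentiable (by simp)).prodMk
      (differentiable_const 0))
  refine ⟨fun i j p => hR (differentiable_E i p) (differentiable_E j p), fun X hX p => ?_, hξ₃,
    hfxx, fun p => by simp [etaV, E, c1, c2, c3, hξ₃], fun p => hη.etaV_V2 (hξ₃ p) (ha0 p),
    fun p => by simp [gm, E, c1, c2, c3], fun p => by simp [gm, E, V2, c1, c2, c3], hK,
    fun p => by rw [hK p]; simp [gm, E, V2, c1, c2, c3, div_neg], fun p => by simpa using hfxx p⟩
  simp [gm, hR (hX.differentiable (by simp) p) (hξ p), c1, c2, c3]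

/-- Theorem 5.3(iii),(iv): an η-Einstein almost paracontact metric 3-dimensional
Walker manifold has zero ξ-sectional curvature and constant nonzero φ-sectional
curvature `-(1/2)f_xx`. -/
theorem etaEinstein_sectional_curvatures (f ξ₁ ξ₂ ξ₃ : Pt → ℝ)
    (hf : ContDiff ℝ (⊤ : ℕ∞) f) (h1 : ContDiff ℝ (⊤ : ℕ∞) ξ₁)
    (h2 : ContDiff ℝ (⊤ : ℕ∞) ξ₂) (h3 : ContDiff ℝ (⊤ : ℕ∞) ξ₃)
    (hconstr : ∀ p : Pt, ξ₂ p ^ 2 + f p * ξ₃ p ^ 2 + 2 * ξ₁ p * ξ₃ p = 1)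
    (a b : Pt → ℝ) (ha : ContDiff ℝ (⊤ : ℕ∞) a) (hb : ContDiff ℝ (⊤ : ℕ∞) b)
    (ha0 : ∀ p : Pt, a p ≠ 0) (hb0 : ∀ p : Pt, b p ≠ 0)
    (hEin : ∀ (i j : Fin 3) (p : Pt),
      rhoT f (E i) (E j) p = a p * gm f (E i) (E j) p
        + b p * etaV f ξ₁ ξ₂ ξ₃ (E i) p * etaV f ξ₁ ξ₂ ξ₃ (E j) p) :
    (∀ (i j : Fin 3) (p : Pt), Rop f (E i) (E j) (fun q => (ξ₁ q, ξ₂ q, ξ₃ q)) p = 0) ∧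
    (∀ X : VF, ContDiff ℝ (⊤ : ℕ∞) X → ∀ p : Pt,
      gm f (Rop f X (fun q => (ξ₁ q, ξ₂ q, ξ₃ q)) (fun q => (ξ₁ q, ξ₂ q, ξ₃ q))) X p = 0) ∧
    (∀ p : Pt, ξ₃ p = 0) ∧ (∀ p : Pt, fxx f p ≠ 0) ∧
    (∀ p : Pt, etaV f ξ₁ ξ₂ ξ₃ (E 0) p = 0) ∧
    (∀ p : Pt, etaV f ξ₁ ξ₂ ξ₃ (V2 f) p = 0) ∧
    (∀ p : Pt, gm f (E 0) (E 0) p = 0) ∧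
    (∀ p : Pt, gm f (E 0) (V2 f) p = 1) ∧
    (∀ p : Pt, gm f (Rop f (E 0) (V2 f) (V2 f)) (E 0) p = (1/2) * fxx f p) ∧
    (∀ p : Pt, gm f (Rop f (E 0) (V2 f) (V2 f)) (E 0) p /
        (gm f (E 0) (E 0) p * gm f (V2 f) (V2 f) p - gm f (E 0) (V2 f) p ^ 2) =
      -((1/2) * fxx f p)) ∧
    (∀ p : Pt, -((1/2) * fxx f p) ≠ 0) :=
  etaEinstein_sectional_curvatures_general f ξ₁ ξ₂ ξ₃ hf h1 h2 hconstr a b ha0 hb0 hEin
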